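/- arXiv:2010.00107 — 2 statements merged into one kernel-verified Lean document; each statement's English description precedes it below -/
import Mathlib

section
/- There exist real sequences (t_n)_{n≥2} and (u_n)_{n≥3} such that the sequence defined by f̃₁ = f₁, f̃₂ = f₂ + t₂·f̃₁, and f̃_n = f_n + t_n·f̃_{n−1} + u_n·f̃_{n−2} for n ≥ 3 satisfies ⟨f̃_n, f̃_m⟩_S = 0 for all m, n ≥ 1 with m ≠ n. -/
open Filter RealInnerProductSpace

variable {H : Type*} [NormedAddCommGroup H] [InnerProductSpace ℝ H]

/-- `Wlt P n` is the span of `P 0, …, P (n-1)`; thus `Wlt P 0 = ⊥ = W_{-1}` and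
`Wlt P (n+1)` is the space `W_n = span{P_0, …, P_n}`. -/
def Wlt (P : ℕ → H) (n : ℕ) : Submodule ℝ H := Submodule.span ℝ (P '' Set.Iio n)

/-- `Wtot P` is the space `W = ⋃ₙ Wₙ` of all polynomials. -/
def Wtot (P : ℕ → H) : Submodule ℝ H := Submodule.span ℝ (Set.range P)

/-- The Sobolev inner product `⟨f, g⟩_S = ⟨f, g⟩₂ + χ⟨Δf, Δg⟩₂`. -/
noncomputable def innerS (Δ : H →ₗ[ℝ] H) (χ : ℝ) (f g : H) : ℝ :=
  ⟪ f, g ⟫ + χ * ⟪ Δ f, Δ g ⟫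

/-- The Sobolev norm `‖f‖_S = √(‖f‖₂² + χ‖Δf‖₂²)`. -/
noncomputable def normS (Δ : H →ₗ[ℝ] H) (χ : ℝ) (f : H) : ℝ :=
  Real.sqrt (‖f‖ ^ 2 + χ * ‖Δ f‖ ^ 2)

/-!
The f̃ₙ are the Gram–Schmidt orthogonalisation of fₙ = 𝒢pₙ₋₁ for the Sobolev form. By
symmetry of 𝒢 and Δ𝒢 = id, ⟨fₙ₊₂, g⟩_S = ⟨pₙ₊₁, 𝒢g⟩₂ + χ⟨pₙ₊₁, Δg⟩₂, which vanishes as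
soon as g ∈ Wₙ₋₁ and Δg ∈ Wₙ. Every f̃ₘ lies in Wₘ with Δf̃ₘ ∈ Wₘ₋₁, so fₙ₊₂ is already
orthogonal to f̃ₘ for m < n and only the projections on f̃ₙ₊₁ and f̃ₙ survive. No f̃ₙ₊₁
vanishes, since Δf̃ₙ₊₁ ≡ pₙ modulo Wₙ₋₁.
-/

namespace LinearMap.BilinForm

variable {K M : Type*} [Field K] [AddCommGroup M] [Module K M]
  (B : LinearMap.BilinForm K M) (f : ℕ → M)

noncomputable def orthoCoeff (x y : M) : K := B x y / B y y

/-- Gram–Schmidt keeping only the projections on the two previous vectors, indexed from `1`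
(the value at `0` is `0`). -/
noncomputable def gramSchmidt3 : ℕ → M
  | 0 => 0
  | 1 => f 1
  | n + 2 => f (n + 2)
      - B.orthoCoeff (f (n + 2)) (gramSchmidt3 (n + 1)) • gramSchmidt3 (n + 1)
      - B.orthoCoeff (f (n + 2)) (gramSchmidt3 n) • gramSchmidt3 n

@[simp]
theorem gramSchmidt3_zero : B.gramSchmidt3 f 0 = 0 := by
  rw [gramSchmidt3]

@[simp]
theorem gramSchmidt3_one : B.gramSchmidt3 f 1 = f 1 := by
  rw [gramSchmidt3]

theorem gramSchmidt3_add_two (n : ℕ) :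
    B.gramSchmidt3 f (n + 2) = f (n + 2)
      - B.orthoCoeff (f (n + 2)) (B.gramSchmidt3 f (n + 1)) • B.gramSchmidt3 f (n + 1)
      - B.orthoCoeff (f (n + 2)) (B.gramSchmidt3 f n) • B.gramSchmidt3 f n := by
  rw [gramSchmidt3]

theorem gramSchmidt3_add_two_eq_add (n : ℕ) :
    B.gramSchmidt3 f (n + 2) = f (n + 2)
      + (-B.orthoCoeff (f (n + 2)) (B.gramSchmidt3 f (n + 1))) • B.gramSchmidt3 f (n + 1)
      + (-B.orthoCoeff (f (n + 2)) (B.gramSchmidt3 f n)) • B.gramSchmidt3 f n := by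
  rw [gramSchmidt3_add_two, neg_smul, neg_smul, ← sub_eq_add_neg, ← sub_eq_add_neg]

theorem gramSchmidt3_add_two_apply (n : ℕ) (x : M) :
    B (B.gramSchmidt3 f (n + 2)) x = B (f (n + 2)) x
      - B.orthoCoeff (f (n + 2)) (B.gramSchmidt3 f (n + 1)) * B (B.gramSchmidt3 f (n + 1)) x
      - B.orthoCoeff (f (n + 2)) (B.gramSchmidt3 f n) * B (B.gramSchmidt3 f n) x := by
  simp only [gramSchmidt3_add_two, map_sub, map_smul, LinearMap.sub_apply,
    LinearMap.smul_apply, smul_eq_mul]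

theorem orthoCoeff_mul_self {x y : M} (hy : B y y ≠ 0) : B.orthoCoeff x y * B y y = B x y :=
  div_mul_cancel₀ _ hy

section Filtration

variable {B f} {V : ℕ → Submodule K M}

theorem gramSchmidt3_mem (hV : Monotone V) (hf_mem : ∀ n, f (n + 1) ∈ V (n + 1)) (n : ℕ) :
    B.gramSchmidt3 f n ∈ V n := by
  induction n using Nat.strong_induction_on with
  | _ n ih =>
    match n with
    | 0 => simp
    | 1 => simpa using hf_mem 0
    | n + 2 =>
      rw [gramSchmidt3_add_two]
      exact sub_mem (sub_mem (hf_mem (n + 1))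
        (Submodule.smul_mem _ _ (hV (by omega) (ih (n + 1) (by omega)))))
        (Submodule.smul_mem _ _ (hV (by omega) (ih n (by omega))))

theorem gramSchmidt3_succ_sub_mem (hV : Monotone V) (hf_mem : ∀ n, f (n + 1) ∈ V (n + 1)) (n : ℕ) :
    B.gramSchmidt3 f (n + 1) - f (n + 1) ∈ V n := by
  match n with
  | 0 => simp
  | n + 1 =>
    rw [gramSchmidt3_add_two_eq_add, add_assoc, add_sub_cancel_left]
    exact add_mem (Submodule.smul_mem _ _ (gramSchmidt3_mem hV hf_mem (n + 1)))
      (Submodule.smul_mem _ _ (hV n.le_succ (gramSchmidt3_mem hV hf_mem n)))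

theorem gramSchmidt3_succ_self_ne_zero (hV : Monotone V) (hf_mem : ∀ n, f (n + 1) ∈ V (n + 1))
    (hB : ∀ x, B x x = 0 → x = 0) (hf_notMem : ∀ n, f (n + 1) ∉ V n) (n : ℕ) :
    B (B.gramSchmidt3 f (n + 1)) (B.gramSchmidt3 f (n + 1)) ≠ 0 := by
  intro h
  have hsub := gramSchmidt3_succ_sub_mem (B := B) hV hf_mem n
  rw [hB _ h, zero_sub, neg_mem_iff] at hsub
  exact hf_notMem n hsub

theorem gramSchmidt3_orthogonal (hV : Monotone V) (hf_mem : ∀ n, f (n + 1) ∈ V (n + 1))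
    (hBsymm : B.IsSymm) (hB : ∀ x, B x x = 0 → x = 0)
    (hf_notMem : ∀ n, f (n + 1) ∉ V n) (hf_orth : ∀ n, ∀ v ∈ V n, B (f (n + 3)) v = 0) :
    ∀ n m, m < n → B (B.gramSchmidt3 f n) (B.gramSchmidt3 f m) = 0 := by
  intro n
  induction n using Nat.strong_induction_on with
  | _ n ih =>
    intro m hmn
    match n, m with
    | _, 0 => simp
    | 1, _ + 1 => omega
    | n + 2, m + 1 =>
      have hne := gramSchmidt3_succ_self_ne_zero hV hf_mem hB hf_notMem
      rw [gramSchmidt3_add_two_apply]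
      rcases (by omega : m = n ∨ m + 1 = n ∨ m + 2 ≤ n) with rfl | rfl | hmn
      · rw [hBsymm.eq (B.gramSchmidt3 f m), ih (m + 1) (by omega) m (by omega),
          orthoCoeff_mul_self _ (hne m)]
        ring
      · rw [ih (m + 2) (by omega) (m + 1) (by omega), orthoCoeff_mul_self _ (hne m)]
        ring
      · obtain ⟨k, rfl⟩ : ∃ k, n = k + 1 := ⟨n - 1, by omega⟩
        rw [hf_orth k _ (hV (by omega) (gramSchmidt3_mem hV hf_mem (m + 1))),
          ih (k + 2) (by omega) (m + 1) (by omega), ih (k + 1) (by omega) (m + 1) (by omega)]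
        ring

end Filtration

end LinearMap.BilinForm

open LinearMap.BilinForm

noncomputable def sobolevForm (Δ : H →ₗ[ℝ] H) (χ : ℝ) : LinearMap.BilinForm ℝ H :=
  innerₗ H + χ • (innerₗ H).compl₁₂ Δ Δ

theorem sobolevForm_apply (Δ : H →ₗ[ℝ] H) (χ : ℝ) (f g : H) :
    sobolevForm Δ χ f g = innerS Δ χ f g := rfl

theorem sobolevForm_isSymm (Δ : H →ₗ[ℝ] H) (χ : ℝ) : (sobolevForm Δ χ).IsSymm :=
  ⟨fun f g => by simp only [sobolevForm_apply, innerS, real_inner_comm]⟩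

theorem sobolevForm_self_eq_zero {Δ : H →ₗ[ℝ] H} {χ : ℝ} (hχ : 0 ≤ χ) {f : H}
    (hf : sobolevForm Δ χ f f = 0) : f = 0 := by
  rw [sobolevForm_apply, innerS] at hf
  have hΔ : 0 ≤ χ * ⟪Δ f, Δ f⟫ := mul_nonneg hχ real_inner_self_nonneg
  exact inner_self_eq_zero.mp (le_antisymm (by linarith) real_inner_self_nonneg)

section Polynomials

variable {P : ℕ → H}

theorem Wlt_mono (P : ℕ → H) : Monotone (Wlt P) := fun _ _ h =>
  Submodule.span_mono (Set.image_mono (Set.Iio_subset_Iio h))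

theorem Wlt_le_Wtot (n : ℕ) : Wlt P n ≤ Wtot P :=
  Submodule.span_mono (Set.image_subset_range _ _)

theorem mem_Wlt_succ_of_sub_mem {n : ℕ} {q : H} (hq : q - P n ∈ Wlt P n) :
    q ∈ Wlt P (n + 1) := by
  have hP : P n ∈ Wlt P (n + 1) := Submodule.subset_span ⟨n, Nat.lt_succ_self n, rfl⟩
  simpa using add_mem (Wlt_mono P n.le_succ hq) hP

theorem notMem_Wlt_of_sub_mem (hP : LinearIndependent ℝ P) {n : ℕ} {q : H}
    (hq : q - P n ∈ Wlt P n) : q ∉ Wlt P n := fun h => by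
  have hPn : P n ∈ Wlt P n := by simpa using sub_mem h hq
  exact hP.notMem_span_image (s := Set.Iio n) (lt_irrefl n) hPn

/-- The elements of `W_n` whose Laplacian lies in `W_{n-1}`. -/
def Wsob (P : ℕ → H) (Δ : H →ₗ[ℝ] H) (n : ℕ) : Submodule ℝ H :=
  Wlt P (n + 1) ⊓ (Wlt P n).comap Δ

theorem Wsob_mono (P : ℕ → H) (Δ : H →ₗ[ℝ] H) : Monotone (Wsob P Δ) := fun _ _ h =>
  inf_le_inf (Wlt_mono P (by omega)) (Submodule.comap_mono (Wlt_mono P h))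

variable {Δ G : H →ₗ[ℝ] H} {p : ℕ → H}

theorem green_mem_Wsob (hGinv : ∀ u ∈ Wtot P, Δ (G u) = u)
    (hpmonic : ∀ n, p n - P n ∈ Wlt P n)
    (hGmap : ∀ n, ∀ u ∈ Wlt P (n + 1), G u ∈ Wlt P (n + 2)) (n : ℕ) :
    G (p n) ∈ Wsob P Δ (n + 1) := by
  have hp := mem_Wlt_succ_of_sub_mem (hpmonic n)
  refine ⟨hGmap n _ hp, ?_⟩
  simpa [hGinv _ (Wlt_le_Wtot _ hp)] using hp

theorem green_notMem_Wsob (hGinv : ∀ u ∈ Wtot P, Δ (G u) = u)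
    (hpmonic : ∀ n, p n - P n ∈ Wlt P n) (hP : LinearIndependent ℝ P) (n : ℕ) :
    G (p n) ∉ Wsob P Δ n := by
  rintro ⟨-, hΔ⟩
  have hp := Wlt_le_Wtot _ (mem_Wlt_succ_of_sub_mem (hpmonic n))
  exact notMem_Wlt_of_sub_mem hP (hpmonic n) (by simpa [hGinv _ hp] using hΔ)

theorem innerS_green_eq_zero (hGinv : ∀ u ∈ Wtot P, Δ (G u) = u)
    (hpmonic : ∀ n, p n - P n ∈ Wlt P n) (hGsym : ∀ u ∈ Wtot P, ∀ v ∈ Wtot P, ⟪G u, v⟫ = ⟪u, G v⟫)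
    (hGmap : ∀ n, ∀ u ∈ Wlt P (n + 1), G u ∈ Wlt P (n + 2))
    (hportho : ∀ n, ∀ w ∈ Wlt P n, ⟪p n, w⟫ = 0) (χ : ℝ) {n : ℕ} {v : H}
    (hv : v ∈ Wsob P Δ n) : innerS Δ χ (G (p (n + 2))) v = 0 := by
  obtain ⟨hvW, hvΔ⟩ := hv
  have hp := Wlt_le_Wtot _ (mem_Wlt_succ_of_sub_mem (hpmonic (n + 2)))
  rw [innerS, hGsym _ hp _ (Wlt_le_Wtot _ hvW), hGinv _ hp,
    hportho _ _ (hGmap n _ hvW), hportho _ _ (Wlt_mono P (by omega) hvΔ), mul_zero, add_zero]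

end Polynomials

theorem statement16_general
    (P : ℕ → H) (hP : LinearIndependent ℝ P)
    (Δ G : H →ₗ[ℝ] H)
    (hGsym : ∀ u ∈ Wtot P, ∀ v ∈ Wtot P, ⟪ G u, v ⟫ = ⟪ u, G v ⟫)
    (hGinv : ∀ u ∈ Wtot P, Δ (G u) = u)
    (hGmap : ∀ n, ∀ u ∈ Wlt P (n + 1), G u ∈ Wlt P (n + 2))
    (χ : ℝ) (hχ : 0 < χ)
    (p : ℕ → H)
    (hpmonic : ∀ n, p n - P n ∈ Wlt P n)
    (hportho : ∀ n, ∀ w ∈ Wlt P n, ⟪ p n, w ⟫ = 0)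
    : ∃ (t u : ℕ → ℝ) (ft : ℕ → H),
      ft 1 = G (p 0) ∧
      ft 2 = G (p 1) + t 2 • ft 1 ∧
      (∀ n, 3 ≤ n → ft n = G (p (n - 1)) + t n • ft (n - 1) + u n • ft (n - 2)) ∧
      (∀ m n, 1 ≤ m → 1 ≤ n → m ≠ n → innerS Δ χ (ft n) (ft m) = 0) := by
  set B := sobolevForm Δ χ
  set f : ℕ → H := fun n => G (p (n - 1))
  set ft := B.gramSchmidt3 f
  have horth := gramSchmidt3_orthogonal (f := f) (Wsob_mono P Δ)
    (green_mem_Wsob hGinv hpmonic hGmap) (sobolevForm_isSymm Δ χ)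
    (fun _ => sobolevForm_self_eq_zero hχ.le)
    (green_notMem_Wsob hGinv hpmonic hP)
    (fun _ _ hv => innerS_green_eq_zero hGinv hpmonic hGsym hGmap hportho χ hv)
  refine ⟨fun n => -B.orthoCoeff (f n) (ft (n - 1)), fun n => -B.orthoCoeff (f n) (ft (n - 2)),
    ft, gramSchmidt3_one B f, ?_, ?_, ?_⟩
  · have h := gramSchmidt3_add_two_eq_add B f 0
    rwa [gramSchmidt3_zero, smul_zero, add_zero] at h
  · intro n hn
    obtain ⟨k, rfl⟩ : ∃ k, n = k + 3 := ⟨n - 3, by omega⟩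
    exact gramSchmidt3_add_two_eq_add B f (k + 1)
  · intro m n _ _ hne
    rcases hne.lt_or_gt with h | h
    · exact horth n m h
    · rw [← sobolevForm_apply, (sobolevForm_isSymm Δ χ).eq]
      exact horth m n h

/-- There exist sequences `(t_n)`, `(u_n)` such that `f̃₁ = f₁`, `f̃₂ = f₂ + t₂f̃₁`, `f̃_n = f_n + t_nf̃_{n−1} + u_nf̃_{n−2}` for `n ≥ 3`, and `⟨f̃_n, f̃_m⟩_S = 0` for `m ≠ n`, `m, n ≥ 1`. -/
theorem statement16
    (P : ℕ → H) (hP : LinearIndependent ℝ P)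
    (Δ G : H →ₗ[ℝ] H)
    (hΔ0 : Δ (P 0) = 0) (hΔsucc : ∀ n, Δ (P (n + 1)) = P n)
    (hGsym : ∀ u ∈ Wtot P, ∀ v ∈ Wtot P, ⟪ G u, v ⟫ = ⟪ u, G v ⟫)
    (hGinv : ∀ u ∈ Wtot P, Δ (G u) = u)
    (hGmap : ∀ n, ∀ u ∈ Wlt P (n + 1), G u ∈ Wlt P (n + 2))
    (χ : ℝ) (hχ : 0 < χ)
    (p : ℕ → H)
    (hpmonic : ∀ n, p n - P n ∈ Wlt P n)
    (hportho : ∀ n, ∀ w ∈ Wlt P n, ⟪ p n, w ⟫ = 0)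
    : ∃ (t u : ℕ → ℝ) (ft : ℕ → H),
      ft 1 = G (p 0) ∧
      ft 2 = G (p 1) + t 2 • ft 1 ∧
      (∀ n, 3 ≤ n → ft n = G (p (n - 1)) + t n • ft (n - 1) + u n • ft (n - 2)) ∧
      (∀ m n, 1 ≤ m → 1 ≤ n → m ≠ n → innerS Δ χ (ft n) (ft m) = 0) :=
  statement16_general P hP Δ G hGsym hGinv hGmap χ hχ p hpmonic hportho
end

section
/- Suppose there exist continuous maps γ, η : [0,1] → X with images contained in I such that γ(0) = η(1), γ(1) = η(0), γ(0) ≠ γ(1), and γ(t) ≠ η(t) for every t ∈ (0,1); suppose also there exist d − 2 pairwise distinct points x₃,…,x_d ∈ I, none of which lies on the image of γ or of η. Then I is not interpolatory; that is, there exists an injective d-tuple of points of I at which the matrix (g_j(x_i))_{1≤i,j≤d} has zero determinant. -/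
/-!
Put `γ t`, `η t`, `x₃, …, x_d` into the rows of the interpolation matrix. The determinant is
continuous in `t`, and going from `t = 0` to `t = 1` swaps the first two rows, so it changes sign
and vanishes at some `t ∈ [0, 1]`. Since `γ t ≠ η t` there, the chosen points are distinct.
-/

open Set Matrix

theorem exists_mem_Icc_eq_zero_of_eq_neg {α G : Type*}
    [ConditionallyCompleteLinearOrder α] [TopologicalSpace α] [OrderTopology α] [DenselyOrdered α]
    [AddCommGroup G] [LinearOrder G] [IsOrderedAddMonoid G] [TopologicalSpace G]
    [OrderClosedTopology G] {f : α → G} {a b : α} (hab : a ≤ b)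
    (hf : ContinuousOn f (Icc a b)) (hba : f b = -f a) : ∃ t ∈ Icc a b, f t = 0 := by
  rw [← uIcc_of_le hab] at hf ⊢
  refine intermediate_value_uIcc hf ?_
  rw [hba, mem_uIcc]
  rcases le_total (f a) 0 with h | h
  · exact Or.inl ⟨h, neg_nonneg.2 h⟩
  · exact Or.inr ⟨neg_nonpos.2 h, h⟩

theorem exists_det_eq_zero_of_eq_submatrix_swap {α n : Type*}
    [ConditionallyCompleteLinearOrder α] [TopologicalSpace α] [OrderTopology α] [DenselyOrdered α]
    [Fintype n] [DecidableEq n] {M : α → Matrix n n ℝ} {a b : α} (hab : a ≤ b)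
    (hM : ContinuousOn M (Icc a b)) {i j : n} (hij : i ≠ j)
    (hswap : M b = (M a).submatrix (Equiv.swap i j) id) : ∃ t ∈ Icc a b, (M t).det = 0 := by
  refine exists_mem_Icc_eq_zero_of_eq_neg hab
    (continuous_id.matrix_det.comp_continuousOn hM) ?_
  simp [hswap, det_permute, Equiv.Perm.sign_swap hij]

/-- `X` a topological space, `d ≥ 2`, `g₁,…,g_d : X → ℝ` continuous. If `I ⊆ X`
contains the images of two continuous paths `γ, η : [0,1] → X` with
`γ(0) = η(1)`, `γ(1) = η(0)`, `γ(0) ≠ γ(1)`, `γ(t) ≠ η(t)` for `t ∈ (0,1)`,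
together with `d − 2` further pairwise distinct points avoiding both paths,
then `I` is not interpolatory: there is an injective `d`-tuple of points of `I`
at which the matrix `(g_j(x_i))` has zero determinant. -/
theorem statement19 {X : Type*} [TopologicalSpace X]
    (d : ℕ) (hd : 2 ≤ d)
    (g : Fin d → X → ℝ) (hg : ∀ j, Continuous (g j))
    (I : Set X)
    (γ η : ℝ → X)
    (hγc : ContinuousOn γ (Set.Icc 0 1)) (hηc : ContinuousOn η (Set.Icc 0 1))
    (hγI : ∀ t ∈ Set.Icc (0 : ℝ) 1, γ t ∈ I)
    (hηI : ∀ t ∈ Set.Icc (0 : ℝ) 1, η t ∈ I)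
    (hend1 : γ 0 = η 1) (hend2 : γ 1 = η 0)
    (hne : γ 0 ≠ γ 1)
    (hsep : ∀ t ∈ Set.Ioo (0 : ℝ) 1, γ t ≠ η t)
    (x : Fin (d - 2) → X)
    (hxinj : Function.Injective x)
    (hxI : ∀ i, x i ∈ I)
    (hxγ : ∀ i, ∀ t ∈ Set.Icc (0 : ℝ) 1, x i ≠ γ t)
    (hxη : ∀ i, ∀ t ∈ Set.Icc (0 : ℝ) 1, x i ≠ η t) :
    ∃ y : Fin d → X, Function.Injective y ∧ (∀ i, y i ∈ I) ∧
      Matrix.det (Matrix.of fun i j => g j (y i)) = 0 := by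
  obtain ⟨k, rfl⟩ := Nat.exists_eq_add_of_le' hd
  let y : ℝ → Fin (k + 2) → X := fun t => vecCons (γ t) (vecCons (η t) x)
  have hy : ContinuousOn y (Icc 0 1) := hγc.finCons (hηc.finCons continuousOn_const)
  have hy_swap : y 1 = y 0 ∘ Equiv.swap 0 1 := by simp [y, hend1, hend2]
  have hrows : Continuous fun p : Fin (k + 2) → X => of fun i j => g j (p i) :=
    continuous_pi fun i => continuous_pi fun j => (hg j).comp (continuous_apply i)
  obtain ⟨t, ht, hdet⟩ := exists_det_eq_zero_of_eq_submatrix_swap zero_le_one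
    (hrows.comp_continuousOn hy) Fin.zero_ne_one (by simp only [Function.comp_apply, hy_swap]; rfl)
  have hγη : γ t ≠ η t := by
    rcases eq_endpoints_or_mem_Ioo_of_mem_Icc ht with rfl | rfl | ht'
    · rwa [← hend2]
    · rwa [← hend1, ne_comm]
    · exact hsep t ht'
  refine ⟨y t, ?_, ?_, hdet⟩
  · simp only [y, vecCons, Fin.cons_injective_iff, mem_range, not_exists, Fin.forall_fin_succ,
      Fin.cons_zero, Fin.cons_succ]
    exact ⟨⟨hγη.symm, fun i h => hxγ i t ht h⟩, fun i h => hxη i t ht h, hxinj⟩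
  · simp only [y, vecCons, Fin.forall_fin_succ, Fin.cons_zero, Fin.cons_succ]
    exact ⟨hγI t ht, hηI t ht, hxI⟩
end
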